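/- For the formula F(x,y,z,w) = R(x,y,z) ∧ R(y,x,w) where R(a,b,c) = ((a∨¬b)∧¬c) ∨ (¬a∧b∧c), the solution set is exactly {0000, 1100, 0110, 1001}, these four solutions are pairwise disconnected in the solution graph of F, yet 0000 and 1100 are connected in the solution graph of the projection of [F] onto {x,y,z} and also in the projection onto {x,y,w}. -/

import Mathlib

def Reach {ι : Type*} [Fintype ι] (S : Set (ι → Bool)) : (ι → Bool) → (ι → Bool) → Prop :=
  Relation.ReflTransGen (fun u v => u ∈ S ∧ v ∈ S ∧ hammingDist u v = 1)

/-- R(a,b,c) = ((a ∨ ¬b) ∧ ¬c) ∨ (¬a ∧ b ∧ c). -/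
def Rrel (a b c : Bool) : Bool := ((a || !b) && !c) || (!a && b && c)

/-!
The four solutions 0000, 1100, 0110, 1001 of `F` are pairwise at Hamming distance two, so the
solution graph of `F` has no edges. Projecting away `w` keeps `100` (the shadow of `1001`), which
is adjacent to both `000` and `110`; projecting away `z` keeps `010` (the shadow of `0110`), which
plays the same role.
-/

namespace Reach

variable {ι : Type*} [Fintype ι] {S : Set (ι → Bool)} {u v w : ι → Bool}

theorem of_hammingDist_eq_one (hu : u ∈ S) (hv : v ∈ S) (huv : hammingDist u v = 1) :
    Reach S u v :=
  Relation.ReflTransGen.single ⟨hu, hv, huv⟩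

theorem trans (huv : Reach S u v) (hvw : Reach S v w) : Reach S u w :=
  Relation.ReflTransGen.trans huv hvw

theorem eq_of_forall_hammingDist_ne_one (hS : ∀ a ∈ S, ∀ b ∈ S, hammingDist a b ≠ 1)
    (huv : Reach S u v) : u = v := by
  induction huv with
  | refl => rfl
  | tail _ hstep => exact absurd hstep.2.2 (hS _ hstep.1 _ hstep.2.1)

end Reach

theorem F_components_not_separated_by_projections :
    -- variables (x,y,z,w) = (s 0, s 1, s 2, s 3)
    let F : Set (Fin 4 → Bool) :=
      {s | (Rrel (s 0) (s 1) (s 2) && Rrel (s 1) (s 0) (s 3)) = true}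
    let ProjXYZ : Set (Fin 3 → Bool) := {p | ∃ s ∈ F, p 0 = s 0 ∧ p 1 = s 1 ∧ p 2 = s 2}
    let ProjXYW : Set (Fin 3 → Bool) := {p | ∃ s ∈ F, p 0 = s 0 ∧ p 1 = s 1 ∧ p 2 = s 3}
    -- the solution set is exactly {0000, 1100, 0110, 1001}
    F = {![false,false,false,false], ![true,true,false,false],
         ![false,true,true,false], ![true,false,false,true]} ∧
    -- the four solutions are pairwise disconnected in G(F)
    (∀ a ∈ F, ∀ b ∈ F, a ≠ b → ¬ Reach F a b) ∧
    -- yet 0000 and 1100 are connected in the projection onto {x,y,z}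
    Reach ProjXYZ ![false,false,false] ![true,true,false] ∧
    -- and also in the projection onto {x,y,w}
    Reach ProjXYW ![false,false,false] ![true,true,false] := by
  intro F ProjXYZ ProjXYW
  have hF₀ : ![false,false,false,false] ∈ F := by decide
  have hF₁ : ![true,true,false,false] ∈ F := by decide
  refine ⟨?_, ?_, ?_, ?_⟩
  · ext s
    revert s
    decide
  · have hF_isolated : ∀ a ∈ F, ∀ b ∈ F, hammingDist a b ≠ 1 := by decide
    exact fun a _ b _ hab hreach => hab (hreach.eq_of_forall_hammingDist_ne_one hF_isolated)
  · have h₀ : ![false,false,false] ∈ ProjXYZ := ⟨_, hF₀, by decide⟩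
    have h₁ : ![true,false,false] ∈ ProjXYZ := ⟨![true,false,false,true], by decide, by decide⟩
    have h₂ : ![true,true,false] ∈ ProjXYZ := ⟨_, hF₁, by decide⟩
    exact (Reach.of_hammingDist_eq_one h₀ h₁ (by decide)).trans
      (Reach.of_hammingDist_eq_one h₁ h₂ (by decide))
  · have h₀ : ![false,false,false] ∈ ProjXYW := ⟨_, hF₀, by decide⟩
    have h₁ : ![false,true,false] ∈ ProjXYW := ⟨![false,true,true,false], by decide, by decide⟩
    have h₂ : ![true,true,false] ∈ ProjXYW := ⟨_, hF₁, by decide⟩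
    exact (Reach.of_hammingDist_eq_one h₀ h₁ (by decide)).trans
      (Reach.of_hammingDist_eq_one h₁ h₂ (by decide))
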